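/- arXiv:2001.03471 — 3 statements merged into one kernel-verified Lean document; each statement's English description precedes it below -/
import Mathlib

section
/- Let p be an odd prime. Then q_p(2) ≡ 2(N_{p-2} − 1) + 1 (mod p), i.e. the Fermat quotient of 2 is congruent modulo p to one plus twice the number of permutations of {1,…,p−2} with an even number of ascents and distinct from the identity. -/
/-!
Worpitzky's identity `k ^ n = ∑ σ, C(k + asc σ, n)` comes from sorting a word `f : Fin n → Fin k`
stably: the words sorted by `σ` are those with `f ∘ σ` weakly increasing, strictly at the descents
of `σ`, and adding to each letter the number of earlier ascents makes them strictly increasing maps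
into `Fin (k + asc σ)`. Take `n = p - 2` and sum over odd `i < p`: modulo `p` only
`i + asc σ ∈ {p - 2, p - 1}` contributes, so `∑ σ (-1) ^ asc σ ≡ ∑_{i odd} i ^ (p - 2)`, a sum of
inverses. Expanding `2 ^ p = ∑ C(p, k)` with `C(p, k) / p ≡ (-1) ^ (k - 1) / k` gives the same
value for the Fermat quotient, while `∑ σ (-1) ^ asc σ = 2 N - (p - 2)! ≡ 2 N - 1` by Wilson.
-/

/-- The number of ascents of a permutation of `Fin n` (positions `i` with `σ i < σ (i+1)`). -/
def numAscents {n : ℕ} (σ : Equiv.Perm (Fin n)) : ℕ :=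
  (Finset.univ.filter (fun i : Fin (n - 1) =>
    σ ⟨i.val, by have := i.isLt; omega⟩ < σ ⟨i.val + 1, by have := i.isLt; omega⟩)).card

/-- The number of permutations of `Fin n` with an even number of ascents. -/
def evenAscentPerms (n : ℕ) : ℕ :=
  (Finset.univ.filter (fun σ : Equiv.Perm (Fin n) => Even (numAscents σ))).card

/-- The Eulerian number `E(n, m)`: permutations of `Fin n` with exactly `m` ascents. -/
def eulerian (n m : ℕ) : ℕ :=
  (Finset.univ.filter (fun σ : Equiv.Perm (Fin n) => numAscents σ = m)).card

/-- `x ≡ 0 (mod p^k)` for a rational `x`: either `x = 0` or the `p`-adic valuation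
of `x` is at least `k`. -/
def PadicDvd (p k : ℕ) (x : ℚ) : Prop :=
  x = 0 ∨ (k : ℤ) ≤ padicValRat p x

open Finset
open scoped Nat

def StrictMonoExcept {n : ℕ} {α : Type*} [LT α] (W : Finset (Fin n)) (g : Fin (n + 1) → α) :
    Prop :=
  ∀ i : Fin n, g i.castSucc < g i.succ ∨ (g i.castSucc = g i.succ ∧ i ∈ W)

section StrictMonoExcept

variable {n k : ℕ} (W : Finset (Fin n))

def weakStepsBefore (i : Fin (n + 1)) : ℕ := #{j ∈ W | j.castSucc < i}

lemma weakStepsBefore_zero : weakStepsBefore W 0 = 0 := by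
  simp [weakStepsBefore]

lemma weakStepsBefore_succ (i : Fin n) :
    weakStepsBefore W i.succ = weakStepsBefore W i.castSucc + if i ∈ W then 1 else 0 := by
  simp only [weakStepsBefore, Fin.castSucc_lt_succ_iff, Fin.castSucc_lt_castSucc_iff,
    le_iff_lt_or_eq, filter_or, filter_eq']
  split_ifs
  · rw [card_union_of_disjoint (by simp), card_singleton]
  · simp

lemma weakStepsBefore_last : weakStepsBefore W (Fin.last n) = #W := by
  simp [weakStepsBefore, Fin.castSucc_lt_last]

lemma weakStepsBefore_le_card (i : Fin (n + 1)) : weakStepsBefore W i ≤ #W :=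
  card_filter_le _ _

lemma weakStepsBefore_le_of_strictMono {m : ℕ} {h : Fin (n + 1) → Fin m} (hh : StrictMono h)
    (i : Fin (n + 1)) : weakStepsBefore W i ≤ h i := by
  induction i using Fin.induction with
  | zero => simp [weakStepsBefore_zero]
  | succ i ih =>
    have hlt := Fin.lt_def.1 (hh (Fin.castSucc_lt_succ (i := i)))
    rw [weakStepsBefore_succ]
    split_ifs <;> omega

lemma sub_weakStepsBefore_lt_of_strictMono {h : Fin (n + 1) → Fin (k + #W)} (hh : StrictMono h)
    (i : Fin (n + 1)) : (h i : ℕ) - weakStepsBefore W i < k := by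
  have hmono : Monotone fun i => (h i : ℕ) - weakStepsBefore W i := by
    refine Fin.monotone_iff_le_succ.2 fun j => ?_
    have hlt := Fin.lt_def.1 (hh (Fin.castSucc_lt_succ (i := j)))
    have hle := weakStepsBefore_le_of_strictMono W hh j.castSucc
    rw [weakStepsBefore_succ]
    split_ifs <;> omega
  have hi := hmono (Fin.le_last i)
  have hlast := (h (Fin.last n)).isLt
  have hW := weakStepsBefore_le_of_strictMono W hh (Fin.last n)
  simp only [weakStepsBefore_last] at hi hW
  omega

def strictMonoExceptEquiv :
    {g : Fin (n + 1) → Fin k // StrictMonoExcept W g} ≃ (Fin (n + 1) ↪o Fin (k + #W)) where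
  toFun g := OrderEmbedding.ofStrictMono
    (fun i => ⟨g.1 i + weakStepsBefore W i, by
      have := (g.1 i).isLt; have := weakStepsBefore_le_card W i; omega⟩)
    (Fin.strictMono_iff_lt_succ.2 fun i => by
      have hg := g.2 i
      simp only [Fin.lt_def, Fin.ext_iff] at hg
      simp only [Fin.lt_def, weakStepsBefore_succ]
      split_ifs with hW <;> simp only [hW, and_true, and_false, or_false] at hg <;> omega)
  invFun h := ⟨fun i => ⟨h i - weakStepsBefore W i,
      sub_weakStepsBefore_lt_of_strictMono W h.strictMono i⟩, fun i => by
    have hlt := Fin.lt_def.1 (h.strictMono (Fin.castSucc_lt_succ (i := i)))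
    have hle := weakStepsBefore_le_of_strictMono W h.strictMono i.castSucc
    simp only [Fin.lt_def, Fin.ext_iff, weakStepsBefore_succ]
    split_ifs with hW <;> simp only [hW, and_true, and_false, or_false] <;> omega⟩
  left_inv g := by ext; simp
  right_inv h := by
    ext i
    simp [Nat.sub_add_cancel (weakStepsBefore_le_of_strictMono W h.strictMono i)]

theorem card_strictMonoExcept :
    Nat.card {g : Fin (n + 1) → Fin k // StrictMonoExcept W g} = (k + #W).choose (n + 1) := by
  rw [Nat.card_congr ((strictMonoExceptEquiv W).trans Set.powersetCard.ofFinEmbEquiv),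
    Set.powersetCard.card, Nat.card_eq_fintype_card, Fintype.card_fin]

end StrictMonoExcept

section Worpitzky

variable {n : ℕ}

def ascentSet (σ : Equiv.Perm (Fin (n + 1))) : Finset (Fin n) := {i | σ i.castSucc < σ i.succ}

lemma numAscents_eq_card_ascentSet (σ : Equiv.Perm (Fin (n + 1))) :
    numAscents σ = #(ascentSet σ) := rfl

lemma Tuple.sort_eq_iff_strictMonoExcept {α : Type*} [LinearOrder α] {f : Fin (n + 1) → α}
    {σ : Equiv.Perm (Fin (n + 1))} :
    Tuple.sort f = σ ↔ StrictMonoExcept (ascentSet σ) (f ∘ σ) := by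
  rw [eq_comm, Tuple.eq_sort_iff', Fin.strictMono_iff_lt_succ]
  refine forall_congr' fun i => ?_
  simp only [ascentSet, Tuple.graphEquiv₁, Equiv.trans_apply, Equiv.coe_fn_mk,
    Function.comp_apply, mem_filter_univ]
  exact Prod.Lex.toLex_lt_toLex

theorem worpitzky (n k : ℕ) :
    k ^ n = ∑ σ : Equiv.Perm (Fin n), (k + numAscents σ).choose n := by
  cases n with
  | zero => simp
  | succ n =>
    calc k ^ (n + 1) = Nat.card (Fin (n + 1) → Fin k) := by simp
      _ = ∑ σ : Equiv.Perm (Fin (n + 1)),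
            Nat.card {f : Fin (n + 1) → Fin k // Tuple.sort f = σ} := by
        rw [← Nat.card_sigma, Nat.card_congr (Equiv.sigmaFiberEquiv _)]
      _ = _ := by
        refine sum_congr rfl fun σ _ => ?_
        rw [numAscents_eq_card_ascentSet, ← card_strictMonoExcept]
        exact Nat.card_congr (Equiv.subtypeEquiv (Equiv.arrowCongr σ.symm (Equiv.refl _))
          fun _ => Tuple.sort_eq_iff_strictMonoExcept)

end Worpitzky

lemma numAscents_le {n : ℕ} (σ : Equiv.Perm (Fin n)) : numAscents σ ≤ n - 1 :=
  (card_filter_le _ _).trans (by simp)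

lemma sum_neg_one_pow_numAscents (R : Type*) [CommRing R] (n : ℕ) :
    ∑ σ : Equiv.Perm (Fin n), (-1 : R) ^ numAscents σ = 2 * evenAscentPerms n - n ! := by
  have h : ∀ a : ℕ, (-1 : R) ^ a = 2 * (if Even a then 1 else 0) - 1 := fun a => by
    rcases a.even_or_odd with ha | ha
    · rw [ha.neg_one_pow, if_pos ha]; norm_num
    · rw [ha.neg_one_pow, if_neg (Nat.not_even_iff_odd.2 ha)]; ring
  simp only [h, sum_sub_distrib, ← mul_sum, sum_boole, sum_const, card_univ, Fintype.card_perm,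
    Fintype.card_fin, nsmul_one, evenAscentPerms]

section FermatQuotient

variable {p : ℕ} [hp : Fact p.Prime]

lemma cast_choose_pred_eq_neg_one_pow {j : ℕ} (hj : j < p) :
    (((p - 1).choose j : ℕ) : ZMod p) = (-1) ^ j := by
  induction j with
  | zero => simp
  | succ j ih =>
    have hpascal : (p - 1).choose j + (p - 1).choose (j + 1) = p.choose (j + 1) := by
      conv_rhs => rw [← Nat.sub_add_cancel hp.out.one_le]
      exact (Nat.choose_succ_succ' _ _).symm
    have hvanish : ((p.choose (j + 1) : ℕ) : ZMod p) = 0 :=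
      (ZMod.natCast_eq_zero_iff _ _).2 (hp.out.dvd_choose_self j.succ_ne_zero hj)
    rw [← hpascal, Nat.cast_add, ih (by omega)] at hvanish
    linear_combination hvanish

lemma cast_choose_div_self {k : ℕ} (hk0 : k ≠ 0) (hkp : k < p) :
    ((p.choose k / p : ℕ) : ZMod p) = -(-1) ^ k * (k : ZMod p) ^ (p - 2) := by
  obtain ⟨j, rfl⟩ := Nat.exists_eq_succ_of_ne_zero hk0
  have hmul : (j + 1) * (p.choose (j + 1) / p) = (p - 1).choose j := by
    have h := Nat.add_one_mul_choose_eq (p - 1) j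
    rw [Nat.sub_add_cancel hp.out.one_le,
      ← Nat.mul_div_cancel' (hp.out.dvd_choose_self j.succ_ne_zero hkp)] at h
    exact Nat.eq_of_mul_eq_mul_left hp.out.pos (by linarith)
  have hk : ((j + 1 : ℕ) : ZMod p) ≠ 0 := by
    rw [Ne, ZMod.natCast_eq_zero_iff]
    exact Nat.not_dvd_of_pos_of_lt j.succ_pos hkp
  calc ((p.choose (j + 1) / p : ℕ) : ZMod p)
      = ((j + 1 : ℕ) : ZMod p) ^ (p - 1) * ((p.choose (j + 1) / p : ℕ) : ZMod p) := by
        rw [ZMod.pow_card_sub_one_eq_one hk, one_mul]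
    _ = ((j + 1 : ℕ) : ZMod p) ^ (p - 2) * (((j + 1) * (p.choose (j + 1) / p) : ℕ) : ZMod p) := by
        rw [show p - 1 = p - 2 + 1 by have := hp.out.two_le; omega]
        push_cast; ring
    _ = -(-1) ^ (j + 1) * ((j + 1 : ℕ) : ZMod p) ^ (p - 2) := by
        rw [hmul, cast_choose_pred_eq_neg_one_pow (by omega)]; ring

lemma sum_range_pow_sub_two_eq_zero : ∑ k ∈ range p, (k : ZMod p) ^ (p - 2) = 0 := by
  have : NeZero p := ⟨hp.out.ne_zero⟩
  rw [← FiniteField.sum_pow_lt_card_sub_one (K := ZMod p) (p - 2)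
    (by rw [ZMod.card]; have := hp.out.two_le; omega)]
  exact sum_nbij' Nat.cast ZMod.val (by simp) (by simp [ZMod.val_lt])
    (fun k hk => ZMod.val_cast_of_lt (mem_range.1 hk)) (fun x _ => ZMod.natCast_zmod_val x)
    (fun _ _ => rfl)

lemma two_mul_fermatQuotient_two_eq_sum_choose_div (hp2 : p ≠ 2) :
    2 * ((2 ^ (p - 1) - 1) / (p : ℤ)) = ∑ k ∈ Ico 1 p, ((p.choose k / p : ℕ) : ℤ) := by
  have hdvd : (p : ℤ) ∣ 2 ^ (p - 1) - 1 := by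
    refine (Int.ModEq.pow_card_sub_one_eq_one hp.out ?_).symm.dvd
    exact_mod_cast Nat.isCoprime_iff_coprime.2
      ((Nat.coprime_primes Nat.prime_two hp.out).2 (Ne.symm hp2))
  have hsum : ∑ k ∈ Ico 1 p, p.choose k + 2 = 2 ^ p := by
    rw [← Nat.sum_range_choose, sum_range_succ, range_eq_Ico,
      sum_eq_sum_Ico_succ_bot hp.out.pos]
    simp only [Nat.choose_zero_right, Nat.choose_self, zero_add]
    ring
  have hterm : ∀ k ∈ Ico 1 p, (p : ℤ) * ((p.choose k / p : ℕ) : ℤ) = p.choose k := fun k hk => by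
    rw [mem_Ico] at hk
    exact_mod_cast Nat.mul_div_cancel' (hp.out.dvd_choose_self (by omega) hk.2)
  have hpow : (2 : ℤ) ^ p = 2 * 2 ^ (p - 1) := by
    rw [← pow_succ', Nat.sub_add_cancel hp.out.one_le]
  apply mul_left_cancel₀ (Nat.cast_ne_zero.2 hp.out.ne_zero : (p : ℤ) ≠ 0)
  rw [mul_left_comm, Int.mul_ediv_cancel' hdvd, mul_sum, sum_congr rfl hterm]
  have := congrArg (Nat.cast : ℕ → ℤ) hsum
  push_cast at this
  linarith

lemma cast_fermatQuotient_two_eq_sum_odd_pow (hp2 : p ≠ 2) :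
    (((2 ^ (p - 1) - 1) / (p : ℤ) : ℤ) : ZMod p) =
      ∑ i ∈ range p with Odd i, (i : ZMod p) ^ (p - 2) := by
  have h2 : (2 : ZMod p) ≠ 0 := Ring.two_ne_zero (by rwa [ZMod.ringChar_zmod_n])
  have hp3 : p - 2 ≠ 0 := by have := hp.out.two_le; omega
  have hsign : ∀ (k : ℕ) (x : ZMod p), -(-1) ^ k * x = 2 * (if Odd k then x else 0) - x :=
    fun k x => by
      rcases k.even_or_odd with hk | hk
      · simp [hk.neg_one_pow, Nat.not_odd_iff_even.2 hk]
      · simp [hk.neg_one_pow, hk, two_mul]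
  apply mul_left_cancel₀ h2
  calc 2 * (((2 ^ (p - 1) - 1) / (p : ℤ) : ℤ) : ZMod p)
      = ∑ k ∈ Ico 1 p, ((p.choose k / p : ℕ) : ZMod p) := by
        exact_mod_cast congrArg (Int.cast : ℤ → ZMod p)
          (two_mul_fermatQuotient_two_eq_sum_choose_div hp2)
    _ = ∑ k ∈ range p, -(-1) ^ k * (k : ZMod p) ^ (p - 2) := by
        rw [range_eq_Ico, sum_eq_sum_Ico_succ_bot hp.out.pos, Nat.cast_zero, zero_pow hp3,
          mul_zero, zero_add]
        exact sum_congr rfl fun k hk => by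
          rw [mem_Ico] at hk
          exact cast_choose_div_self (by omega) hk.2
    _ = 2 * ∑ i ∈ range p with Odd i, (i : ZMod p) ^ (p - 2) := by
        simp only [hsign, sum_sub_distrib, ← mul_sum, ← sum_filter,
          sum_range_pow_sub_two_eq_zero, sub_zero]

lemma cast_choose_sub_two (hp2 : p ≠ 2) {N : ℕ} (hN : N + 2 < 2 * p) :
    ((N.choose (p - 2) : ℕ) : ZMod p) = if N = p - 2 then 1 else if N = p - 1 then -1 else 0 := by
  have hpodd : p % 2 = 1 := hp.out.eq_two_or_odd.resolve_left hp2
  have hp3 : 3 ≤ p := by have := hp.out.two_le; omega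
  split_ifs with h1 h2
  · simp [h1]
  · rw [h2, cast_choose_pred_eq_neg_one_pow (by omega), Odd.neg_one_pow (Nat.odd_iff.2 (by omega))]
  · rcases lt_or_ge N (p - 2) with hlt | hge
    · rw [Nat.choose_eq_zero_of_lt hlt, Nat.cast_zero]
    · exact (ZMod.natCast_eq_zero_iff _ _).2 (hp.out.dvd_choose (by omega) (by omega) (by omega))

lemma sum_odd_choose_sub_two (hp2 : p ≠ 2) {m : ℕ} (hm : m + 3 ≤ p) :
    ∑ i ∈ range p with Odd i, (((i + m).choose (p - 2) : ℕ) : ZMod p) = (-1) ^ m := by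
  have hpodd : p % 2 = 1 := hp.out.eq_two_or_odd.resolve_left hp2
  calc ∑ i ∈ range p with Odd i, (((i + m).choose (p - 2) : ℕ) : ZMod p)
      = ∑ i ∈ range p with Odd i,
          ((if p - 2 - m = i then 1 else 0) - (if p - 1 - m = i then 1 else 0) : ZMod p) :=
        sum_congr rfl fun i hi => by
          rw [mem_filter, mem_range] at hi
          rw [cast_choose_sub_two hp2 (by omega)]
          split_ifs <;> first | omega | simp
    _ = (-1) ^ m := by
        rw [sum_sub_distrib, sum_ite_eq, sum_ite_eq]
        simp only [mem_filter, mem_range, Nat.odd_iff]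
        rcases m.even_or_odd with hm2 | hm2
        · have := Nat.even_iff.1 hm2
          rw [if_pos (by omega), if_neg (by omega), hm2.neg_one_pow, sub_zero]
        · have := Nat.odd_iff.1 hm2
          rw [if_neg (by omega), if_pos (by omega), hm2.neg_one_pow, zero_sub]

lemma sum_neg_one_pow_numAscents_eq_sum_odd_pow (hp2 : p ≠ 2) :
    ∑ σ : Equiv.Perm (Fin (p - 2)), (-1 : ZMod p) ^ numAscents σ =
      ∑ i ∈ range p with Odd i, (i : ZMod p) ^ (p - 2) := by
  have hp3 : 3 ≤ p := by have := hp.out.two_le; omega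
  calc ∑ σ : Equiv.Perm (Fin (p - 2)), (-1 : ZMod p) ^ numAscents σ
      = ∑ σ : Equiv.Perm (Fin (p - 2)), ∑ i ∈ range p with Odd i,
          (((i + numAscents σ).choose (p - 2) : ℕ) : ZMod p) :=
        sum_congr rfl fun σ _ =>
          (sum_odd_choose_sub_two hp2 (by have := numAscents_le σ; omega)).symm
    _ = ∑ i ∈ range p with Odd i, ∑ σ : Equiv.Perm (Fin (p - 2)),
          (((i + numAscents σ).choose (p - 2) : ℕ) : ZMod p) := sum_comm
    _ = ∑ i ∈ range p with Odd i, (i : ZMod p) ^ (p - 2) :=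
        sum_congr rfl fun i _ => by exact_mod_cast (congrArg Nat.cast (worpitzky (p - 2) i)).symm

lemma cast_factorial_sub_two : (((p - 2)! : ℕ) : ZMod p) = 1 := by
  have h := ZMod.wilsons_lemma (p := p)
  obtain ⟨m, rfl⟩ : ∃ m, p = m + 2 := ⟨p - 2, by have := hp.out.two_le; omega⟩
  have hm : ((m + 1 : ℕ) : ZMod (m + 2)) = -1 := by
    rw [eq_neg_iff_add_eq_zero]; exact_mod_cast ZMod.natCast_self (m + 2)
  rw [show m + 2 - 1 = m + 1 by omega, Nat.factorial_succ, Nat.cast_mul, hm] at h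
  rw [Nat.add_sub_cancel]
  linear_combination -h

end FermatQuotient

theorem fermat_quotient_two_eq_twice_even_ascent_perms_plus_one
    (p : ℕ) (hp : p.Prime) (hodd : Odd p) :
    ((2 ^ (p - 1) - 1) / (p : ℤ)) ≡
      2 * ((evenAscentPerms (p - 2) : ℤ) - 1) + 1 [ZMOD (p : ℤ)] := by
  have : Fact p.Prime := ⟨hp⟩
  have hp2 : p ≠ 2 := by rintro rfl; exact absurd hodd (by decide)
  rw [← ZMod.intCast_eq_intCast_iff, cast_fermatQuotient_two_eq_sum_odd_pow hp2,
    ← sum_neg_one_pow_numAscents_eq_sum_odd_pow hp2, sum_neg_one_pow_numAscents,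
    cast_factorial_sub_two]
  push_cast
  ring
end

section
/- Let p be an odd prime. Then Σ_{k=1}^{p-2} B_k/(k·2^k) ≡ q_p(2) + w_p (mod p), i.e. the powers-of-two weighted sum of the first p−2 divided Bernoulli numbers is congruent modulo p to the Fermat quotient of 2 plus the Wilson quotient. -/
/-!
Faulhaber's formula with `n = 2` and exponent `p - 1` reads `∑_{i<p} B_i C(p,i) 2^(p-i) = p`.
Modulo `p²`, each term with `1 ≤ i ≤ p - 2` is `-2p B'_i / (i 2^i)`, where `B'_i = (-1)^i B_i`,
since `i C(p,i) = p C(p-1,i-1)`, `C(p-1,i-1) ≡ (-1)^(i-1)`, `2^(p-1) ≡ 1 (mod p)` and `B_i` is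
`p`-integral by von Staudt–Clausen; the term `i = 0` is `2^p = 2 + 2p q_p(2)` and the term
`i = p - 1` is `2p B_{p-1}`. Faulhaber's formula with `n = p` gives
`p B_{p-1} ≡ ∑_{k<p} k^(p-1) (mod p²)`, and Lerch's formula (compare
`∏_{0<k<p} k^(p-1) = ((p-1)!)^(p-1)` modulo `p²`) turns this into `p B_{p-1} ≡ p - 1 + p w_p`.
As `∑ B'_i / (i 2^i) = S + 1/2` for the sum `S` of the theorem, collecting terms leaves
`2p (S - q_p(2) - w_p) ≡ 0 (mod p²)`.
-/

open Finset Nat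

theorem Finset.prod_one_add_mul_of_mul_self_eq_zero {ι R : Type*} [CommRing R] {ε : R}
    (hε : ε * ε = 0) (s : Finset ι) (c : ι → R) :
    ∏ i ∈ s, (1 + ε * c i) = 1 + ε * ∑ i ∈ s, c i := by
  classical
  induction s using Finset.induction_on with
  | empty => simp
  | insert a s ha ih =>
    rw [prod_insert ha, sum_insert ha, ih]
    linear_combination (c a * ∑ i ∈ s, c i) * hε

theorem Finset.sum_eq_card_add_prod_sub_one_of_mul_self_eq_zero {ι R : Type*} [CommRing R]
    {ε : R} (hε : ε * ε = 0) {s : Finset ι} {x c : ι → R}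
    (hx : ∀ i ∈ s, x i = 1 + ε * c i) :
    ∑ i ∈ s, x i = #s + (∏ i ∈ s, x i - 1) := by
  rw [sum_congr rfl hx, prod_congr rfl hx, prod_one_add_mul_of_mul_self_eq_zero hε,
    sum_add_distrib, ← mul_sum]
  simp

theorem Finset.sum_range_eq_add_sum_Icc_add {M : Type*} [AddCommMonoid M] (f : ℕ → M) {n : ℕ}
    (hn : 2 ≤ n) : ∑ i ∈ range n, f i = f 0 + ∑ i ∈ Icc 1 (n - 2), f i + f (n - 1) := by
  obtain ⟨m, rfl⟩ : ∃ m, n = m + 2 := ⟨n - 2, by omega⟩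
  rw [sum_range_succ, range_eq_Ico, sum_eq_sum_Ico_succ_bot (by omega),
    Finset.Ico_add_one_right_eq_Icc]
  simp

theorem ZMod.intCast_eq_mul_ediv {n : ℕ} {a : ℤ} (h : (n : ℤ) ∣ a) (m : ℕ) :
    (a : ZMod m) = n * (a / n : ℤ) := by
  rw [← Int.cast_natCast, ← Int.cast_mul, Int.mul_ediv_cancel' h]

theorem ZMod.natCast_self_mul_self (n : ℕ) : (n : ZMod (n ^ 2)) * n = 0 := by
  rw [← sq]; exact_mod_cast ZMod.natCast_self (n ^ 2)

theorem ZMod.natCast_choose_sub_one {p k : ℕ} [Fact p.Prime] (hk : k < p) :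
    ((p - 1).choose k : ZMod p) = (-1) ^ k := by
  induction k with
  | zero => simp
  | succ k ih =>
    have hpascal : (p - 1).choose k + (p - 1).choose (k + 1) = p.choose (k + 1) := by
      conv_rhs => rw [← Nat.sub_add_cancel (Fact.out : p.Prime).one_le]
      exact (Nat.choose_succ_succ _ _).symm
    have hdvd : (p.choose (k + 1) : ZMod p) = 0 :=
      (ZMod.natCast_eq_zero_iff _ _).2 ((Fact.out : p.Prime).dvd_choose_self k.succ_ne_zero hk)
    have := congrArg (fun n : ℕ => (n : ZMod p)) hpascal
    push_cast at this
    rw [pow_succ, ← ih (by omega)]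
    linear_combination this + hdvd

theorem Int.prime_dvd_choose_sub_one_mul_pow_sub_neg_one_pow {p k : ℕ} [Fact p.Prime] {a : ℤ}
    (hk : k < p) (ha : ¬ (p : ℤ) ∣ a) :
    (p : ℤ) ∣ (p - 1).choose k * a ^ (p - 1) - (-1) ^ k := by
  rw [← ZMod.intCast_zmod_eq_zero_iff_dvd] at ha ⊢
  push_cast
  rw [ZMod.natCast_choose_sub_one hk, ZMod.pow_card_sub_one_eq_one ha, mul_one, sub_self]

-- Both sides are `1 + p w_p`: Wilson gives `(p-1)! = p w_p - 1`, and `p - 1` is even.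
theorem ZMod.factorial_pow_sub_one {p : ℕ} [Fact p.Prime] (hp2 : p ≠ 2) :
    ((p - 1)! : ZMod (p ^ 2)) ^ (p - 1) = (p - 1)! + 2 := by
  have hp : p.Prime := Fact.out
  have hε := ZMod.natCast_self_mul_self p
  have hwilson : (p : ℤ) ∣ (p - 1)! + 1 := by
    rw [← ZMod.intCast_zmod_eq_zero_iff_dvd]
    push_cast
    rw [ZMod.wilsons_lemma, neg_add_cancel]
  have hw := ZMod.intCast_eq_mul_ediv hwilson (p ^ 2)
  push_cast at hw
  set w : ZMod (p ^ 2) := ((((p - 1)! + 1 : ℤ) / p : ℤ) : ZMod (p ^ 2))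
  have hpow := prod_one_add_mul_of_mul_self_eq_zero hε (range (p - 1)) fun _ => -w
  simp only [prod_const, sum_const, card_range, nsmul_eq_mul] at hpow
  calc ((p - 1)! : ZMod (p ^ 2)) ^ (p - 1) = (1 + p * -w) ^ (p - 1) := by
        rw [← (Nat.Odd.sub_odd (hp.odd_of_ne_two hp2) odd_one).neg_pow]
        congr 1
        linear_combination -hw
    _ = (p - 1)! + 2 := by
        rw [hpow, Nat.cast_sub hp.one_le]
        linear_combination -hw - w * hε

-- Lerch's formula `∑_{0<k<p} q_p(k) ≡ w_p (mod p)`,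
-- since `∑_{0<k<p} k^(p-1) = p - 1 + p ∑ q_p(k)`.
theorem sum_range_pow_sub_one_modEq {p : ℕ} [Fact p.Prime] (hp2 : p ≠ 2) :
    ∑ k ∈ range p, (k : ℤ) ^ (p - 1) ≡ p - 1 + ((p - 1)! + 1) [ZMOD p ^ 2] := by
  have hp : p.Prime := Fact.out
  have hε := ZMod.natCast_self_mul_self p
  have hfermat : ∀ k ∈ Ico 1 p, (k : ZMod (p ^ 2)) ^ (p - 1) =
      1 + p * ((((k : ℤ) ^ (p - 1) - 1) / p : ℤ) : ZMod (p ^ 2)) := by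
    intro k hk
    rw [mem_Ico] at hk
    have hdvd : (p : ℤ) ∣ (k : ℤ) ^ (p - 1) - 1 := by
      refine (Int.ModEq.pow_card_sub_one_eq_one hp ?_).symm.dvd
      exact Int.isCoprime_iff_gcd_eq_one.2 (Nat.coprime_of_lt_prime (by omega) hk.2 hp).symm
    have := ZMod.intCast_eq_mul_ediv hdvd (p ^ 2)
    push_cast at this
    linear_combination this
  have hprod : ∏ k ∈ Ico 1 p, (k : ZMod (p ^ 2)) ^ (p - 1) =
      ((p - 1)! : ZMod (p ^ 2)) ^ (p - 1) := by
    rw [prod_pow, ← Nat.cast_prod, ← prod_Ico_id_eq_factorial, Nat.sub_add_cancel hp.one_le]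
  rw [show (p : ℤ) ^ 2 = (p ^ 2 : ℕ) by push_cast; rfl, ← ZMod.intCast_eq_intCast_iff]
  push_cast
  rw [range_eq_Ico, sum_eq_sum_Ico_succ_bot hp.pos, Nat.cast_zero,
    zero_pow (by have := hp.two_le; omega), zero_add,
    sum_eq_card_add_prod_sub_one_of_mul_self_eq_zero hε hfermat, hprod,
    ZMod.factorial_pow_sub_one hp2, card_Ico, Nat.cast_sub hp.one_le]
  ring

theorem padicNorm_two {p : ℕ} [Fact p.Prime] (hp2 : p ≠ 2) : padicNorm p 2 = 1 := by
  exact_mod_cast (padicNorm.nat_eq_one_iff 2).2 fun h =>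
    hp2 ((Nat.prime_dvd_prime_iff_eq Fact.out Nat.prime_two).1 h)

theorem padicNorm_le_of_padicNorm_mul_le {p : ℕ} [Fact p.Prime] {a x : ℚ} {k : ℤ}
    (ha : padicNorm p a = (p : ℚ)⁻¹) (h : padicNorm p (a * x) ≤ p ^ (k - 1)) :
    padicNorm p x ≤ p ^ k := by
  have hp : (0 : ℚ) < p := by exact_mod_cast (Fact.out : p.Prime).pos
  rw [padicNorm.mul, ha, zpow_sub_one₀ hp.ne', mul_comm (_ ^ k)] at h
  exact le_of_mul_le_mul_left h (inv_pos.2 hp)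

theorem padicDvd_of_padicNorm_le {p k : ℕ} [Fact p.Prime] {x : ℚ}
    (h : padicNorm p x ≤ p ^ (-k : ℤ)) : PadicDvd p k x := by
  refine or_iff_not_imp_left.2 fun hx => ?_
  rw [padicNorm.eq_zpow_of_nonzero hx] at h
  have := (zpow_le_zpow_iff_right₀ (by exact_mod_cast (Fact.out : p.Prime).one_lt)).1 h
  omega

theorem sum_bernoulli_mul_choose_mul_pow (n : ℕ) {m : ℕ} (hm : m ≠ 0) :
    ∑ i ∈ range m, bernoulli i * m.choose i * (n : ℚ) ^ (m - i) =
      m * ∑ k ∈ range n, (k : ℚ) ^ (m - 1) := by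
  obtain ⟨e, rfl⟩ := Nat.exists_eq_succ_of_ne_zero hm
  rw [sum_range_pow, mul_sum]
  refine sum_congr rfl fun i _ => ?_
  push_cast
  field_simp

theorem sum_bernoulli'_div {s : Finset ℕ} (hs : 1 ∈ s) (d : ℕ → ℚ) :
    ∑ i ∈ s, bernoulli' i / d i = ∑ i ∈ s, bernoulli i / d i + 1 / d 1 := by
  rw [← sub_eq_iff_eq_add', ← sum_sub_distrib, sum_eq_single_of_mem 1 hs]
  · rw [bernoulli'_one, bernoulli_one]; ring
  · intro i _ hi
    rw [bernoulli_eq_bernoulli'_of_ne_one hi, sub_self]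

theorem padicNorm_bernoulli_le_one {p i : ℕ} [Fact p.Prime] (hi : i < p - 1) :
    padicNorm p (bernoulli i) ≤ 1 := by
  rcases Nat.even_or_odd i with ⟨k, rfl⟩ | hodd
  · rcases Nat.eq_zero_or_pos k with rfl | hk
    · simp
    obtain ⟨N, hN⟩ := Bernoulli.vonStaudt_clausen k
    rw [← two_mul, eq_sub_of_add_eq hN.symm]
    refine padicNorm.sub.trans (max_le (padicNorm.of_int N) (padicNorm.sum_le' ?_ zero_le_one))
    intro q hq
    rw [mem_filter] at hq
    have : Fact q.Prime := ⟨hq.2.1⟩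
    have hqp : q ≠ p := by
      rintro rfl
      have := Nat.le_of_dvd (by omega) hq.2.2
      omega
    rw [padicNorm.div, padicNorm.one, padicNorm.padicNorm_of_prime_of_ne hqp.symm, div_one]
  · obtain rfl | h1 := eq_or_ne i 1
    · rw [bernoulli_one, padicNorm.div, padicNorm.neg, padicNorm.one, padicNorm_two (by omega),
        div_one]
    · simp [bernoulli_eq_zero_of_odd hodd (by have := hodd.pos; omega)]

theorem Nat.Prime.sq_dvd_choose_mul_pow_sub_one_sub {p i : ℕ} (hp : p.Prime) (hp2 : p ≠ 2)
    (hi : i < p - 1) : p ^ 2 ∣ p.choose i * p ^ (p - 1 - i) := by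
  have hp3 : 3 ≤ p := by have := hp.two_le; omega
  rcases Nat.eq_zero_or_pos i with rfl | hi0
  · simpa using pow_dvd_pow p (by omega : 2 ≤ p - 1)
  · rw [sq]
    exact mul_dvd_mul (hp.dvd_choose_self hi0.ne' (by omega)) (dvd_pow_self p (by omega))

theorem padicNorm_mul_bernoulli_sub_sum_range_pow_le {p : ℕ} [Fact p.Prime] (hp2 : p ≠ 2) :
    padicNorm p (p * bernoulli (p - 1) - ∑ k ∈ range p, (k : ℚ) ^ (p - 1)) ≤
      p ^ (-2 : ℤ) := by
  have hp : p.Prime := Fact.out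
  have hfaulhaber := sum_bernoulli_mul_choose_mul_pow p hp.ne_zero
  rw [← Nat.sub_add_cancel hp.one_le, sum_range_succ, Nat.sub_add_cancel hp.one_le,
    Nat.sub_sub_self hp.one_le, Nat.choose_symm hp.one_le, Nat.choose_one_right] at hfaulhaber
  have hsplit : p * bernoulli (p - 1) - ∑ k ∈ range p, (k : ℚ) ^ (p - 1) =
      -∑ i ∈ range (p - 1), bernoulli i * ((p.choose i * p ^ (p - 1 - i) : ℕ) : ℚ) := by
    refine mul_left_cancel₀ (Nat.cast_ne_zero.2 hp.ne_zero : (p : ℚ) ≠ 0) ?_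
    rw [mul_sub, ← hfaulhaber, mul_neg, mul_sum]
    have hterm : ∀ i ∈ range (p - 1),
        (p : ℚ) * (bernoulli i * ((p.choose i * p ^ (p - 1 - i) : ℕ) : ℚ)) =
          bernoulli i * p.choose i * p ^ (p - i) := by
      intro i hi
      rw [mem_range] at hi
      rw [show p - i = p - 1 - i + 1 by omega]
      push_cast
      ring
    rw [sum_congr rfl hterm]
    ring
  rw [hsplit, padicNorm.neg]
  refine padicNorm.sum_le' (fun i hi => ?_) (by positivity)
  have hnorm : padicNorm p ((p.choose i * p ^ (p - 1 - i) : ℕ) : ℤ) ≤ p ^ (-2 : ℤ) :=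
    padicNorm.dvd_iff_norm_le.1 (Int.natCast_dvd_natCast.2
      (hp.sq_dvd_choose_mul_pow_sub_one_sub hp2 (mem_range.1 hi)))
  rw [padicNorm.mul]
  push_cast at hnorm ⊢
  exact mul_le_of_le_one_left (padicNorm.nonneg _)
    (padicNorm_bernoulli_le_one (mem_range.1 hi)) |>.trans hnorm

theorem padicNorm_mul_bernoulli_sub_one_sub_le {p : ℕ} [Fact p.Prime] (hp2 : p ≠ 2) :
    padicNorm p (p * bernoulli (p - 1) - (p - 1 + ((p - 1)! + 1))) ≤ p ^ (-2 : ℤ) := by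
  have hlerch : padicNorm p (∑ k ∈ range p, (k : ℚ) ^ (p - 1) - (p - 1 + ((p - 1)! + 1))) ≤
      p ^ (-2 : ℤ) := by
    have := padicNorm.dvd_iff_norm_le (p := p) (n := 2).1
      (by exact_mod_cast (sum_range_pow_sub_one_modEq hp2).symm.dvd)
    exact_mod_cast this
  calc _ = padicNorm p ((p * bernoulli (p - 1) - ∑ k ∈ range p, (k : ℚ) ^ (p - 1)) +
        (∑ k ∈ range p, (k : ℚ) ^ (p - 1) - (p - 1 + ((p - 1)! + 1)))) := by ring_nf
    _ ≤ _ := padicNorm.nonarchimedean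
    _ ≤ _ := max_le (padicNorm_mul_bernoulli_sub_sum_range_pow_le hp2) hlerch

theorem bernoulli_mul_choose_mul_two_pow_add_eq {p j : ℕ} (hj : j < p) :
    bernoulli (j + 1) * p.choose (j + 1) * 2 ^ (p - (j + 1)) +
        2 * p * bernoulli' (j + 1) / ((j + 1 : ℕ) * 2 ^ (j + 1)) =
      2 * p * (bernoulli (j + 1) / ((j + 1 : ℕ) * 2 ^ (j + 1))) *
        ((p - 1).choose j * 2 ^ (p - 1) - (-1) ^ j) := by
  have hchoose : (p : ℚ) * (p - 1).choose j = p.choose (j + 1) * (j + 1) := by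
    have := Nat.add_one_mul_choose_eq (p - 1) j
    rw [Nat.sub_add_cancel (by omega)] at this
    exact_mod_cast this
  have hpow : (2 : ℚ) ^ (j + 1) * 2 ^ (p - (j + 1)) = 2 * 2 ^ (p - 1) := by
    rw [← pow_add, show j + 1 + (p - (j + 1)) = p - 1 + 1 by omega, _root_.pow_succ']
  rw [bernoulli'_eq_bernoulli]
  push_cast
  field_simp
  linear_combination -2 * bernoulli (j + 1) * 2 ^ (p - 1) * hchoose +
    bernoulli (j + 1) * p.choose (j + 1) * (j + 1) * hpow

theorem padicNorm_bernoulli_mul_choose_mul_two_pow_add_le {p i : ℕ} [Fact p.Prime]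
    (hi : i ∈ Icc 1 (p - 2)) :
    padicNorm p (bernoulli i * p.choose i * 2 ^ (p - i) + 2 * p * bernoulli' i / (i * 2 ^ i)) ≤
      p ^ (-2 : ℤ) := by
  have hp : p.Prime := Fact.out
  rw [mem_Icc] at hi
  obtain ⟨j, rfl⟩ : ∃ j, i = j + 1 := ⟨i - 1, by omega⟩
  have hp2 : p ≠ 2 := by omega
  have hunit : padicNorm p (((j + 1) * 2 ^ (j + 1) : ℕ) : ℚ) = 1 := by
    refine (padicNorm.nat_eq_one_iff _).2 fun h => ?_
    rcases (Nat.Prime.dvd_mul hp).1 h with h | h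
    · have := Nat.le_of_dvd (by omega) h; omega
    · exact hp2 ((Nat.prime_dvd_prime_iff_eq hp Nat.prime_two).1 (hp.dvd_of_dvd_pow h))
  rw [Nat.cast_mul, Nat.cast_pow, Nat.cast_ofNat] at hunit
  have hB : padicNorm p (bernoulli (j + 1) / ((j + 1 : ℕ) * 2 ^ (j + 1))) ≤ 1 := by
    rw [padicNorm.div, hunit, div_one]
    exact padicNorm_bernoulli_le_one (by omega)
  have hdvd :
      padicNorm p (((p - 1).choose j * 2 ^ (p - 1) - (-1) ^ j : ℤ) : ℚ) ≤ (p : ℚ)⁻¹ := by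
    have := (padicNorm.dvd_iff_norm_le (p := p) (n := 1)
      (z := (p - 1).choose j * 2 ^ (p - 1) - (-1) ^ j)).1 (by
        rw [pow_one]
        refine Int.prime_dvd_choose_sub_one_mul_pow_sub_neg_one_pow (by omega) ?_
        exact_mod_cast fun h => hp2 ((Nat.prime_dvd_prime_iff_eq hp Nat.prime_two).1 h))
    rwa [Nat.cast_one, zpow_neg_one] at this
  push_cast at hdvd
  rw [bernoulli_mul_choose_mul_two_pow_add_eq (by omega), padicNorm.mul,
    padicNorm.mul, padicNorm.mul, padicNorm_two hp2, padicNorm.padicNorm_p_of_prime]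
  calc _ ≤ 1 * (p : ℚ)⁻¹ * 1 * (p : ℚ)⁻¹ :=
        mul_le_mul (by gcongr) hdvd (padicNorm.nonneg _) (by positivity)
    _ = p ^ (-2 : ℤ) := by rw [zpow_neg, zpow_ofNat]; ring

theorem two_mul_mul_sum_bernoulli_div_sub_eq {p : ℕ} (hp : 3 ≤ p) :
    2 * p * ((∑ k ∈ Icc 1 (p - 2), bernoulli k / ((k : ℚ) * 2 ^ k)) -
      (((2 : ℚ) ^ (p - 1) - 1) / p + ((p - 1)! + 1 : ℚ) / p)) =
      (∑ i ∈ Icc 1 (p - 2),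
        (bernoulli i * p.choose i * 2 ^ (p - i) + 2 * p * bernoulli' i / (i * 2 ^ i))) +
      2 * (p * bernoulli (p - 1) - (p - 1 + ((p - 1)! + 1))) := by
  have hfaulhaber := sum_bernoulli_mul_choose_mul_pow 2 (show p ≠ 0 by omega)
  simp only [sum_range_succ, range_zero, sum_empty, Nat.cast_ofNat, Nat.cast_zero, Nat.cast_one,
    one_pow, zero_pow (show p - 1 ≠ 0 by omega), zero_add, mul_one] at hfaulhaber
  rw [sum_range_eq_add_sum_Icc_add _ (by omega), bernoulli_zero, Nat.choose_zero_right,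
    Nat.sub_zero, Nat.choose_symm (by omega), Nat.choose_one_right,
    show p - (p - 1) = 1 by omega, Nat.cast_one, one_mul, pow_one] at hfaulhaber
  have hpow : (2 : ℚ) ^ p = 2 * 2 ^ (p - 1) := by
    rw [← _root_.pow_succ', Nat.sub_add_cancel (by omega)]
  have hp0 : (p : ℚ) ≠ 0 := by exact_mod_cast (show p ≠ 0 by omega)
  simp only [sum_add_distrib, mul_div_assoc, ← mul_sum]
  rw [sum_bernoulli'_div (by rw [mem_Icc]; omega)]
  field_simp
  linear_combination hpow - hfaulhaber

theorem weighted_divided_bernoulli_sum_eq_fermat_plus_wilson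
    (p : ℕ) (hp : p.Prime) (hodd : Odd p) :
    PadicDvd p 1 ((∑ k ∈ Finset.Icc 1 (p - 2), bernoulli k / ((k : ℚ) * 2 ^ k)) -
      (((2 : ℚ) ^ (p - 1) - 1) / p + (Nat.factorial (p - 1) + 1 : ℚ) / p)) := by
  have : Fact p.Prime := ⟨hp⟩
  have hp2 : p ≠ 2 := by rintro rfl; exact absurd hodd (by decide)
  refine padicDvd_of_padicNorm_le (padicNorm_le_of_padicNorm_mul_le (a := 2 * p) ?_ ?_)
  · rw [padicNorm.mul, padicNorm_two hp2, padicNorm.padicNorm_p_of_prime, one_mul]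
  rw [two_mul_mul_sum_bernoulli_div_sub_eq (by have := hp.two_le; omega)]
  refine padicNorm.nonarchimedean.trans (max_le ?_ ?_)
  · exact padicNorm.sum_le' (fun i hi => padicNorm_bernoulli_mul_choose_mul_two_pow_add_le hi)
      (by positivity)
  · rw [padicNorm.mul, padicNorm_two hp2, one_mul]
    exact padicNorm_mul_bernoulli_sub_one_sub_le hp2
end

section
/- Let p be an odd prime. Then Σ_{m odd, 1 ≤ m ≤ p−2} H_m ≡ (1 + q_p(2))/2 (mod p), i.e. the sum of the harmonic numbers with odd index up to p−2 is congruent modulo p to one half of (1 plus the Fermat quotient of 2). -/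
/-- The `m`-th harmonic number `H_m = 1 + 1/2 + ... + 1/m`. -/
def harmonic' (m : ℕ) : ℚ := ∑ k ∈ Finset.Icc 1 m, (1 : ℚ) / k

/-!
With `p = 2r + 3`, summation by parts gives
`2 ∑_{j ≤ r} H_{2j+1} = p H_{2r+1} - (2r+1) - H_r / 2`, which reduces the claim to
`H_{p-1} ≡ 0` and Eisenstein's congruence `H_{(p-1)/2} ≡ -2 q_p(2) (mod p)`. The first holds
because `1/k + 1/(p-k) = p / (k (p-k))`. For the second, `C(p-1, k) ≡ (-1)^k` turns
`∑_{k<p-1} C(p-1, k)/(k+1) = 2 q_p(2)` into `∑_{k<p-1} (-1)^k/(k+1) = H_{p-1} - H_{(p-1)/2}`.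

A congruence `x ≡ 0 (mod p)` of `p`-integral rationals is expressed as
`Rat.padicValuation p x < 1`, so that the ultrametric inequality combines congruences.
-/

open Finset

def fermatQuotient (p : ℕ) (a : ℚ) : ℚ := (a ^ (p - 1) - 1) / p

theorem harmonic'_eq_harmonic (m : ℕ) : harmonic' m = harmonic m := by
  simp [harmonic', harmonic_eq_sum_Icc]

theorem sum_filter_odd_Icc {M : Type*} [AddCommMonoid M] (f : ℕ → M) (r : ℕ) :
    ∑ m ∈ (Icc 1 (2 * r + 1)).filter Odd, f m = ∑ j ∈ range (r + 1), f (2 * j + 1) := by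
  refine (sum_nbij' (2 * · + 1) (· / 2) ?_ ?_ ?_ ?_ fun _ _ ↦ rfl).symm <;>
    simp +contextual only [mem_filter, mem_Icc, mem_range, Nat.odd_iff] <;> omega

theorem two_mul_sum_harmonic_odd (r : ℕ) :
    2 * ∑ j ∈ range (r + 1), harmonic (2 * j + 1) =
      (2 * r + 3) * harmonic (2 * r + 1) - (2 * r + 1) - harmonic r / 2 := by
  induction r with
  | zero => norm_num
  | succ r ih =>
    rw [sum_range_succ, mul_add, ih, show 2 * (r + 1) + 1 = 2 * r + 1 + 1 + 1 by ring,
      harmonic_succ (2 * r + 1 + 1), harmonic_succ (2 * r + 1), harmonic_succ r]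
    push_cast
    field_simp
    ring

theorem sum_range_neg_one_pow_div (n : ℕ) :
    ∑ k ∈ range (2 * n), (-1 : ℚ) ^ k / (k + 1) = harmonic (2 * n) - harmonic n := by
  induction n with
  | zero => simp
  | succ n ih =>
    rw [show 2 * (n + 1) = 2 * n + 1 + 1 by ring, sum_range_succ, sum_range_succ, ih,
      harmonic_succ, harmonic_succ, harmonic_succ, pow_succ, Even.neg_one_pow (by simp)]
    push_cast
    field_simp
    ring

theorem sum_range_choose_div_succ (n : ℕ) :
    ∑ k ∈ range (n + 1), (n.choose k : ℚ) / (k + 1) = (2 ^ (n + 1) - 1) / (n + 1) := by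
  have hterm (k : ℕ) : (n.choose k : ℚ) / (k + 1) = (n + 1).choose (k + 1) / (n + 1) := by
    rw [div_eq_div_iff (by positivity) (by positivity)]
    exact_mod_cast (mul_comm _ _).trans (Nat.add_one_mul_choose_eq n k)
  have hsum := Nat.sum_range_choose (n + 1)
  rw [sum_range_succ'] at hsum
  simp_rw [hterm, ← sum_div]
  congr 1
  rw [eq_sub_iff_add_eq]
  exact_mod_cast hsum

theorem sum_harmonic_odd_sub_eq (r : ℕ) :
    ∑ j ∈ range (r + 1), harmonic (2 * j + 1) - (1 + fermatQuotient (2 * r + 3) 2) / 2 =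
      ↑(2 * r + 3) * (harmonic (2 * r + 2) - 1) / (2 : ℕ) -
        (harmonic (r + 1) + 2 * fermatQuotient (2 * r + 3) 2) / (4 : ℕ) := by
  rw [eq_div_of_mul_eq two_ne_zero ((mul_comm _ _).trans (two_mul_sum_harmonic_odd r)),
    fermatQuotient, harmonic_succ (2 * r + 1), harmonic_succ r]
  push_cast
  field_simp
  ring

section Prime

variable {p : ℕ} [Fact p.Prime]

theorem ZMod.natCast_choose_pred {k : ℕ} (hk : k < p) :
    ((p - 1).choose k : ZMod p) = (-1) ^ k := by
  induction k with
  | zero => simp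
  | succ k ih =>
    have hpascal := Nat.choose_succ_succ' (p - 1) k
    rw [Nat.sub_add_cancel (Fact.out : p.Prime).one_le] at hpascal
    have hdvd : ((p.choose (k + 1) : ℕ) : ZMod p) = 0 :=
      (ZMod.natCast_eq_zero_iff _ _).mpr ((Fact.out : p.Prime).dvd_choose_self (by omega) hk)
    rw [hpascal, Nat.cast_add, ih (by omega)] at hdvd
    rw [pow_succ]
    linear_combination hdvd

theorem padicDvd_one_of_padicValuation_lt_one {x : ℚ} (hx : Rat.padicValuation p x < 1) :
    PadicDvd p 1 x := by
  by_cases h0 : x = 0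
  · exact Or.inl h0
  · simp only [Rat.padicValuation, Valuation.coe_mk, MonoidWithZeroHom.coe_mk, ZeroHom.coe_mk,
      if_neg h0, ← WithZero.exp_zero, WithZero.exp_lt_exp] at hx
    exact Or.inr (by push_cast; omega)

theorem Rat.padicValuation_self_lt_one : Rat.padicValuation p p < 1 := by
  rw [Rat.padicValuation_self, ← WithZero.exp_zero, WithZero.exp_lt_exp]
  norm_num

theorem Rat.padicValuation_intCast_lt_one {a : ℤ} (ha : (p : ℤ) ∣ a) :
    Rat.padicValuation p a < 1 := by
  rw [Rat.padicValuation_cast]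
  exact Int.padicValuation_lt_one_iff.mpr ha

theorem Rat.padicValuation_div_natCast {b : ℕ} (hb : ¬ p ∣ b) (x : ℚ) :
    Rat.padicValuation p (x / b) = Rat.padicValuation p x := by
  have hb1 : Rat.padicValuation p b = 1 := by
    rw [← Int.cast_natCast, Rat.padicValuation_cast, Int.padicValuation_eq_one_iff]
    exact_mod_cast hb
  rw [map_div₀, hb1, div_one]

theorem padicValuation_harmonic_pred_lt_one (hp : p ≠ 2) :
    Rat.padicValuation p (harmonic (p - 1)) < 1 := by
  have hprime : p.Prime := Fact.out
  have hreflect : ∑ k ∈ range (p - 1), ((p - 1 - k : ℕ) : ℚ)⁻¹ = harmonic (p - 1) := by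
    rw [harmonic, ← sum_range_reflect]
    exact sum_congr rfl fun k hk ↦ by rw [mem_range] at hk; congr 3; omega
  have hpair : harmonic (p - 1) =
      ∑ k ∈ range (p - 1), (p : ℚ) / (2 * (k + 1) * (p - 1 - k) : ℕ) := by
    calc harmonic (p - 1)
        = (harmonic (p - 1) + ∑ k ∈ range (p - 1), ((p - 1 - k : ℕ) : ℚ)⁻¹) / 2 := by
          rw [hreflect]; ring
      _ = _ := by
        rw [harmonic, ← sum_add_distrib, sum_div]
        refine sum_congr rfl fun k hk ↦ ?_
        have hk : k + 1 < p := by rw [mem_range] at hk; omega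
        have hne : ((p - 1 - k : ℕ) : ℚ) ≠ 0 := by exact_mod_cast (by omega : p - 1 - k ≠ 0)
        rw [Nat.cast_mul, Nat.cast_mul]
        field_simp
        push_cast [show k ≤ p - 1 by omega, hprime.one_le]
        ring
  rw [hpair]
  refine Valuation.map_sum_lt _ one_ne_zero fun k hk ↦ ?_
  have hk : k + 1 < p := by rw [mem_range] at hk; omega
  have h2 : ¬ p ∣ 2 := fun h ↦ hp ((Nat.prime_dvd_prime_iff_eq hprime Nat.prime_two).mp h)
  have hb : ¬ p ∣ 2 * (k + 1) * (p - 1 - k) := by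
    simp only [hprime.dvd_mul, not_or]
    exact ⟨⟨h2, Nat.not_dvd_of_pos_of_lt (by omega) hk⟩,
      Nat.not_dvd_of_pos_of_lt (by omega) (by omega)⟩
  rw [Rat.padicValuation_div_natCast hb]
  exact Rat.padicValuation_self_lt_one

theorem padicValuation_harmonic_half_add_two_mul_fermatQuotient_lt_one (hp : p ≠ 2) :
    Rat.padicValuation p (harmonic ((p - 1) / 2) + 2 * fermatQuotient p 2) < 1 := by
  have hH := padicValuation_harmonic_pred_lt_one hp
  obtain ⟨n, rfl⟩ : Odd p := (Fact.out : p.Prime).odd_of_ne_two hp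
  simp only [Nat.add_sub_cancel, Nat.mul_div_cancel_left _ two_pos] at hH ⊢
  have hbin := sum_range_choose_div_succ (2 * n)
  rw [sum_range_succ, Nat.choose_self] at hbin
  have hsplit : harmonic n + 2 * fermatQuotient (2 * n + 1) 2 = harmonic (2 * n) +
      ∑ k ∈ range (2 * n), ((((2 * n).choose k - (-1) ^ k : ℤ) : ℚ) / (k + 1 : ℕ)) := by
    push_cast
    simp only [sub_div, sum_sub_distrib, fermatQuotient, Nat.add_sub_cancel]
    push_cast at hbin ⊢
    field_simp at hbin ⊢
    rw [sum_range_neg_one_pow_div]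
    linear_combination -hbin
  rw [hsplit]
  refine Valuation.map_add_lt _ hH (Valuation.map_sum_lt _ one_ne_zero fun k hk ↦ ?_)
  rw [mem_range] at hk
  rw [Rat.padicValuation_div_natCast (Nat.not_dvd_of_pos_of_lt (by omega) (by omega))]
  refine Rat.padicValuation_intCast_lt_one ((ZMod.intCast_zmod_eq_zero_iff_dvd _ _).mp ?_)
  push_cast
  rw [sub_eq_zero, ← ZMod.natCast_choose_pred (p := 2 * n + 1) (by omega)]
  simp

end Prime

theorem sum_odd_index_harmonic_eq_half_one_plus_fermat_quotient
    (p : ℕ) (hp : p.Prime) (hodd : Odd p) :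
    PadicDvd p 1 ((∑ m ∈ (Finset.Icc 1 (p - 2)).filter (fun m => Odd m), harmonic' m) -
      (1 + ((2 : ℚ) ^ (p - 1) - 1) / p) / 2) := by
  have : Fact p.Prime := ⟨hp⟩
  have hp2 : p ≠ 2 := by rintro rfl; exact absurd hodd (by decide)
  have hH := padicValuation_harmonic_pred_lt_one hp2
  have hE := padicValuation_harmonic_half_add_two_mul_fermatQuotient_lt_one hp2
  obtain ⟨r, rfl⟩ : ∃ r, p = 2 * r + 3 := by
    obtain ⟨k, rfl⟩ := hodd; exact ⟨k - 1, by have := hp.two_le; omega⟩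
  rw [show 2 * r + 3 - 1 = 2 * r + 2 by omega] at hH
  rw [show (2 * r + 3 - 1) / 2 = r + 1 by omega] at hE
  change PadicDvd _ 1 (_ - (1 + fermatQuotient _ 2) / 2)
  have h2 : ¬ 2 * r + 3 ∣ 2 := Nat.not_dvd_of_pos_of_lt two_pos (by omega)
  have h4 : ¬ 2 * r + 3 ∣ 4 := fun h ↦ h2 (hp.dvd_of_dvd_pow (show 2 * r + 3 ∣ 2 ^ 2 from h))
  rw [show 2 * r + 3 - 2 = 2 * r + 1 by omega, sum_filter_odd_Icc]
  simp only [harmonic'_eq_harmonic]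
  apply padicDvd_one_of_padicValuation_lt_one
  rw [sum_harmonic_odd_sub_eq]
  refine Valuation.map_sub_lt _ ?_ (by rwa [Rat.padicValuation_div_natCast h4])
  rw [Rat.padicValuation_div_natCast h2, map_mul]
  exact mul_lt_one_of_nonneg_of_lt_one_left zero_le Rat.padicValuation_self_lt_one
    (Valuation.map_sub_le _ hH.le (map_one _).le)
end
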